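/- arXiv:2311.07846 — 3 statements merged into one kernel-verified Lean document; each statement's English description precedes it below -/
import Mathlib

section
/- Let G be a finite group acting transitively on a finite set Ω, let A be a subgroup of G, and let B be a proper normal subgroup of A. Let ω_1, …, ω_k ∈ Ω with k ≥ 2 be such that the B-orbits ω_i^B are pairwise distinct for i ≠ j and ω_1^A = ω_1^B ∪ ω_2^B ∪ … ∪ ω_k^B. Let X be a non-empty proper subset of Ω, let X^G = {X^g : g ∈ G}, and let Δ = {Y ∈ X^G : Y ∩ ω_1^A ≠ ∅}. If B acts transitively on each A-orbit of Δ, then the pair (X, J), where J is the multiset Ω + k·ω_1^B − ω_1^A (that is, μ_J(ω) = 1 + k·[ω ∈ ω_1^B] − [ω ∈ ω_1^A]), is a witness to G being non-spreading; in particular, G is non-spreading. -/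
open scoped Pointwise

/-- A subset `X` of `Ω` is *trivial* if its indicator function is constant
(i.e. `X = ∅` or `X = univ`) or there is a unique point in `X`. -/
def TrivialSet {Ω : Type*} (X : Set Ω) : Prop :=
  X = ∅ ∨ X = Set.univ ∨ ∃! ω, ω ∈ X

/-- A multiset of elements of `Ω`, given by its multiplicity function `μ`, is *trivial*
if `μ` is constant on `Ω` or there is a unique point with nonzero multiplicity. -/
def TrivialMultiset {Ω : Type*} (μ : Ω → ℕ) : Prop :=
  (∀ a b : Ω, μ a = μ b) ∨ ∃! ω, μ ω ≠ 0

/-- `(X, J)` (where the multiset `J` is given by its multiplicity function `μ`) is a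
*witness* to `G` being non-spreading on `Ω`: `X` and `J` are nontrivial, `|J|` divides
`|Ω|`, and `∑_{x ∈ X^g} μ_J(x)` is constant over `g ∈ G`. -/
def SpreadingWitness (G : Type*) (Ω : Type*) [Group G] [Fintype Ω] [MulAction G Ω]
    (X : Set Ω) (μ : Ω → ℕ) : Prop :=
  ¬ TrivialSet X ∧ ¬ TrivialMultiset μ ∧
    (∑ ω : Ω, μ ω) ∣ Fintype.card Ω ∧
    ∃ c : ℕ, ∀ g : G, ∑ ω : Ω, (g • X).indicator μ ω = c

/-- A (transitive) group `G` on a finite set `Ω` is *non-spreading* if some witness exists. -/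
def IsNonSpreading (G : Type*) (Ω : Type*) [Group G] [Fintype Ω] [MulAction G Ω] : Prop :=
  ∃ (X : Set Ω) (μ : Ω → ℕ), SpreadingWitness G Ω X μ

/-!
Since `A` normalises `B`, the orbit `ω₁^A` is the disjoint union of the `k` translates
`a • ω₁^B` (`a ∈ A`). If `B` is transitive on the `A`-orbit of a translate `Y` of `X`, then
`a⁻¹ • Y = b • Y` for some `b ∈ B`, so `Y` meets every `a • ω₁^B` in as many points as it meets
`ω₁^B`. Hence `|Y ∩ ω₁^A| = k |Y ∩ ω₁^B|`, and the `J`-weight `∑_{x ∈ Y} μ_J(x)` of `Y` is `|Y|`;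
for `Y = Ω` this gives `|J| = |Ω|`. Nontriviality comes for free in a transitive action: equal
weights on the translates of a singleton would force `μ_J` to be constant, and `μ_J` cannot be
supported at one point when `X` is a nonempty proper subset.
-/

open MulAction

section Witness

variable {G Ω M : Type*} [Group G] [MulAction G Ω] [Fintype Ω] [AddCommMonoid M]

lemma apply_eq_of_sum_indicator_smul_singleton_eq [IsPretransitive G Ω] {μ : Ω → M} {x₀ : Ω}
    {c : M} (hc : ∀ g : G, ∑ x, (g • ({x₀} : Set Ω)).indicator μ x = c) (y : Ω) : μ y = c := by
  obtain ⟨g, rfl⟩ := exists_smul_eq G x₀ y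
  rw [← hc g, Set.smul_set_singleton, Finset.sum_eq_single (g • x₀)]
  · simp
  · intro x _ hx
    simp [hx]
  · simp

lemma not_existsUnique_ne_zero_of_sum_indicator_smul_eq [IsPretransitive G Ω] {X : Set Ω}
    (hX₁ : X.Nonempty) (hX₂ : X ≠ Set.univ) {μ : Ω → M} {c : M}
    (hc : ∀ g : G, ∑ x, (g • X).indicator μ x = c) : ¬ ∃! p, μ p ≠ 0 := by
  rintro ⟨p, hp, hunique⟩
  have hsum (g : G) : ∑ x, (g • X).indicator μ x = (g • X).indicator μ p :=
    Finset.sum_eq_single p (fun x _ hx => by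
      rw [Set.indicator_apply_eq_zero]; exact fun _ => not_not.1 (mt (hunique x) hx))
      (by simp)
  obtain ⟨x, hx⟩ := hX₁
  obtain ⟨y, hy⟩ := (Set.ne_univ_iff_exists_notMem X).1 hX₂
  obtain ⟨g₁, hg₁⟩ := exists_smul_eq G x p
  obtain ⟨g₂, hg₂⟩ := exists_smul_eq G y p
  have hmem : p ∈ g₁ • X := hg₁ ▸ Set.smul_mem_smul_set hx
  have hnotMem : p ∉ g₂ • X := hg₂ ▸ (Set.smul_mem_smul_set_iff).not.2 hy
  apply hp
  rw [← Set.indicator_of_mem hmem μ, ← hsum, hc, ← hc g₂, hsum, Set.indicator_of_notMem hnotMem]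

lemma spreadingWitness_of_sum_indicator_smul_eq [IsPretransitive G Ω] {X : Set Ω}
    (hX₁ : X.Nonempty) (hX₂ : X ≠ Set.univ) {μ : Ω → ℕ} {a b : Ω} (hab : μ a ≠ μ b)
    (hdvd : (∑ x, μ x) ∣ Fintype.card Ω) {c : ℕ}
    (hc : ∀ g : G, ∑ x, (g • X).indicator μ x = c) : SpreadingWitness G Ω X μ := by
  refine ⟨?_, ?_, hdvd, c, hc⟩
  · rintro (h | h | ⟨x₀, hx₀, hunique⟩)
    · exact hX₁.ne_empty h
    · exact hX₂ h
    · rw [Set.eq_singleton_iff_unique_mem.2 ⟨hx₀, hunique⟩] at hc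
      exact hab ((apply_eq_of_sum_indicator_smul_singleton_eq hc a).trans
        (apply_eq_of_sum_indicator_smul_singleton_eq hc b).symm)
  · rintro (h | h)
    · exact hab (h a b)
    · exact not_existsUnique_ne_zero_of_sum_indicator_smul_eq hX₁ hX₂ hc h

end Witness

section Counting

variable {G Ω : Type*} [Group G] [MulAction G Ω]

lemma smul_orbit_of_mem_normalizer {B : Subgroup G} {g : G} (hg : g ∈ Subgroup.normalizer B)
    (x : Ω) : g • orbit B x = orbit B (g • x) := by
  ext y
  constructor
  · rintro ⟨_, ⟨b, rfl⟩, rfl⟩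
    refine ⟨⟨g * b * g⁻¹, (Subgroup.mem_normalizer_iff.1 hg b).1 b.2⟩, ?_⟩
    simp [Subgroup.smul_def, mul_smul]
  · rintro ⟨b, rfl⟩
    refine ⟨_, ⟨⟨g⁻¹ * b * g, (Subgroup.mem_normalizer_iff''.1 hg b).1 b.2⟩, rfl⟩, ?_⟩
    simp [Subgroup.smul_def, mul_smul]

lemma Set.ncard_inter_smul_set (g : G) (Y S : Set Ω) :
    (Y ∩ g • S).ncard = (g⁻¹ • Y ∩ S).ncard := by
  rw [← Set.ncard_smul_set g⁻¹, Set.smul_set_inter, inv_smul_smul]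

lemma ncard_inter_orbit_smul {B : Subgroup G} {a : G} (ha : a ∈ Subgroup.normalizer B)
    {Y : Set Ω} {b : B} (hb : (b : G) • Y = a⁻¹ • Y) (x : Ω) :
    (Y ∩ orbit B (a • x)).ncard = (Y ∩ orbit B x).ncard := by
  have hO : (b : G) • orbit B x = orbit B x := smul_orbit b x
  calc (Y ∩ orbit B (a • x)).ncard = ((b : G) • Y ∩ (b : G) • orbit B x).ncard := by
        rw [← smul_orbit_of_mem_normalizer ha, Set.ncard_inter_smul_set, ← hb, hO]
    _ = (Y ∩ orbit B x).ncard := by rw [← Set.smul_set_inter, Set.ncard_smul_set]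

lemma ncard_inter_iUnion_orbit [Finite Ω] {ι : Type*} [Fintype ι] {A B : Subgroup G}
    (hAB : A ≤ Subgroup.normalizer B) {Y : Set Ω}
    (hY : ∀ a : A, ∃ b : B, (b : G) • Y = (a : G) • Y)
    (ω : ι → Ω) (i₀ : ι) (hω : ∀ i, ω i ∈ orbit A (ω i₀))
    (hdist : Pairwise fun i j => orbit B (ω i) ≠ orbit B (ω j)) :
    (Y ∩ ⋃ i, orbit B (ω i)).ncard = Fintype.card ι * (Y ∩ orbit B (ω i₀)).ncard := by
  have hterm (i : ι) : (Y ∩ orbit B (ω i)).ncard = (Y ∩ orbit B (ω i₀)).ncard := by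
    obtain ⟨a, ha⟩ := hω i
    obtain ⟨b, hb⟩ := hY a⁻¹
    rw [← ha]
    exact ncard_inter_orbit_smul (hAB a.2) hb _
  rw [Set.inter_iUnion, Set.ncard_iUnion_of_finite (fun _ => Set.toFinite _)
    (fun i j hij => ((orbit.eq_or_disjoint _ _).resolve_left (hdist hij)).mono
      Set.inter_subset_right Set.inter_subset_right),
    finsum_eq_sum_of_fintype, Finset.sum_congr rfl fun i _ => hterm i, Finset.sum_const,
    Finset.card_univ, smul_eq_mul]

end Counting

lemma Set.sum_indicator_one_eq_ncard {Ω : Type*} [Fintype Ω] (S : Set Ω) :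
    ∑ x, S.indicator (1 : Ω → ℕ) x = S.ncard := by
  classical
  simp [Set.indicator_apply, Finset.sum_boole, Set.ncard_eq_toFinset_card']

lemma sum_indicator_eq_ncard_of_ncard_inter_eq {Ω : Type*} [Fintype Ω] {k : ℕ} {Y S T : Set Ω}
    (h : (Y ∩ T).ncard = k * (Y ∩ S).ncard) :
    ∑ x, Y.indicator (fun x => 1 + k * S.indicator 1 x - T.indicator 1 x) x = Y.ncard := by
  classical
  have hpt (x : Ω) : Y.indicator (fun x => 1 + k * S.indicator 1 x - T.indicator 1 x) x
      + (Y ∩ T).indicator 1 x = Y.indicator 1 x + k * (Y ∩ S).indicator 1 x := by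
    by_cases hY : x ∈ Y <;> by_cases hS : x ∈ S <;> by_cases hT : x ∈ T <;>
      simp [hY, hS, hT, add_comm]
  have hsum := Finset.sum_congr rfl fun x (_ : x ∈ Finset.univ) => hpt x
  rw [Finset.sum_add_distrib, Finset.sum_add_distrib, ← Finset.mul_sum] at hsum
  simp only [Set.sum_indicator_one_eq_ncard, h] at hsum
  omega

/-- Theorem 2.2, the AB-lemma. Let `G` be a finite group acting transitively
on a finite set `Ω`, `A ≤ G`, and `B` a proper normal subgroup of `A`. Let `ω ⟨0, by omega⟩, …, ω (k-1)`
(`k ≥ 2`) have pairwise distinct `B`-orbits whose union is the `A`-orbit of `ω ⟨0, by omega⟩`. Let `X` be a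
nonempty proper subset of `Ω` and suppose `B` is transitive on each `A`-orbit of
`Δ = {Y ∈ X^G : Y ∩ (ω ⟨0, by omega⟩)^A ≠ ∅}`. Then `(X, Ω + k·(ω ⟨0, by omega⟩)^B − (ω ⟨0, by omega⟩)^A)` is a witness to `G`
being non-spreading; in particular `G` is non-spreading. -/
theorem AB_lemma (G : Type*) [Group G] (Ω : Type*) [Fintype Ω] [MulAction G Ω]
    [MulAction.IsPretransitive G Ω]
    (A B : Subgroup G)
    (hnorm : ∀ a ∈ A, ∀ b ∈ B, a * b * a⁻¹ ∈ B)
    (k : ℕ) (hk : 2 ≤ k) (ω : Fin k → Ω)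
    (hdist : ∀ i j : Fin k, i ≠ j → MulAction.orbit B (ω i) ≠ MulAction.orbit B (ω j))
    (hcover : MulAction.orbit A (ω ⟨0, by omega⟩) = ⋃ i, MulAction.orbit B (ω i))
    (X : Set Ω) (hX1 : X.Nonempty) (hX2 : X ≠ Set.univ)
    (htrans : ∀ Y : Set Ω,
      ((∃ g : G, g • X = Y) ∧ (Y ∩ MulAction.orbit A (ω ⟨0, by omega⟩)).Nonempty) →
        ∀ a : A, ∃ b : B, (b : G) • Y = (a : G) • Y) :
    SpreadingWitness G Ω X
        (fun x => 1 + k * (MulAction.orbit B (ω ⟨0, by omega⟩)).indicator 1 x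
          - (MulAction.orbit A (ω ⟨0, by omega⟩)).indicator 1 x) ∧
      IsNonSpreading G Ω := by
  set i₀ : Fin k := ⟨0, by omega⟩
  set i₁ : Fin k := ⟨1, by omega⟩
  set μ : Ω → ℕ := fun x => 1 + k * (orbit B (ω i₀)).indicator 1 x
    - (orbit A (ω i₀)).indicator 1 x
  have hAB : A ≤ Subgroup.normalizer B := fun a ha => Subgroup.mem_normalizer_iff.2 fun b =>
    ⟨hnorm a ha b, fun hb => by simpa [mul_assoc] using hnorm a⁻¹ (A.inv_mem ha) _ hb⟩
  have hmem (i : Fin k) : ω i ∈ orbit A (ω i₀) :=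
    hcover ▸ Set.mem_iUnion.2 ⟨i, mem_orbit_self _⟩
  have hBA_orbit : orbit B (ω i₀) ⊆ orbit A (ω i₀) :=
    hcover ▸ Set.subset_iUnion (fun i => orbit B (ω i)) i₀
  have hcount {Y : Set Ω} (hY : ∀ a : A, ∃ b : B, (b : G) • Y = (a : G) • Y) :
      (Y ∩ orbit A (ω i₀)).ncard = k * (Y ∩ orbit B (ω i₀)).ncard := by
    simpa [hcover] using ncard_inter_iUnion_orbit hAB hY ω i₀ hmem hdist
  have hweight (g : G) : ∑ x, (g • X).indicator μ x = X.ncard := by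
    rw [sum_indicator_eq_ncard_of_ncard_inter_eq, Set.ncard_smul_set]
    rcases (g • X ∩ orbit A (ω i₀)).eq_empty_or_nonempty with h | h
    · have hB : g • X ∩ orbit B (ω i₀) = ∅ :=
        Set.subset_eq_empty (Set.inter_subset_inter_right _ hBA_orbit) h
      simp [h, hB]
    · exact hcount (htrans _ ⟨⟨g, rfl⟩, h⟩)
  have htotal : ∑ x, μ x = Fintype.card Ω := by
    simpa using
      sum_indicator_eq_ncard_of_ncard_inter_eq (hcount (Y := Set.univ) fun _ => ⟨1, by simp⟩)
  have hω₁ : ω i₁ ∉ orbit B (ω i₀) := fun h =>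
    hdist i₁ i₀ (by simp [i₀, i₁, Fin.ext_iff]) (orbit_eq_iff.2 h)
  have hμ : μ (ω i₀) ≠ μ (ω i₁) := by
    simp [μ, hω₁, hmem, mem_orbit_self]
    omega
  have hw : SpreadingWitness G Ω X μ :=
    spreadingWitness_of_sum_indicator_smul_eq hX1 hX2 hμ htotal.dvd hweight
  exact ⟨hw, X, μ, hw⟩
end

section
/- Let T be a non-abelian finite simple group, and suppose there exist a proper subgroup A of T and a proper normal subgroup B of A such that A = B(A ∩ A^τ) for all τ ∈ Aut(T). Then the pair (A, J), where J is the multiset Ω + |A:B|·B − A on Ω = T (that is, μ_J(x) = |A:B| for x ∈ B, μ_J(x) = 0 for x ∈ A \ B, and μ_J(x) = 1 for x ∈ T \ A), is a witness to W(T) being non-spreading in its action on Ω = T; in particular, W(T) is non-spreading. -/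
open scoped Pointwise

/-- The group `W(T) = ⟨ρ₁(T×T), ρ₂(Aut T), σ⟩ ≤ Sym(T)`, where `ρ₁(t₁,t₂) : x ↦ t₁⁻¹ x t₂`,
`ρ₂(τ) : x ↦ τ(x)` and `σ : x ↦ x⁻¹`. -/
def diagW (T : Type*) [Group T] : Subgroup (Equiv.Perm T) :=
  Subgroup.closure
    ({e : Equiv.Perm T | ∃ t₁ t₂ : T, ∀ x, e x = t₁⁻¹ * x * t₂} ∪
      {e : Equiv.Perm T | ∃ τ : MulAut T, ∀ x, e x = τ x} ∪
      {e : Equiv.Perm T | ∀ x, e x = x⁻¹})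

/-!
Every element of `W(T)` is of the form `x ↦ a τ(x^{±1}) b` with `τ ∈ Aut(T)`, so it maps `A` onto a
left coset `dC` of `C = A^σ` for some automorphism `σ`. If `dC` meets `A` in a point `bc` with
`b ∈ B` and `c ∈ A ∩ C`, then `dC ∩ A` and `dC ∩ B` are translates of `A ∩ C` and `B ∩ C`, and the
supplement condition `A = B(A ∩ C)` gives `|A ∩ C : B ∩ C| = |A : B|`; hence
`|A : B| · |dC ∩ B| = |dC ∩ A|` (both sides vanish if `dC` misses `A`). The `J`-weight of `dC`,
which is `|A : B| · |dC ∩ B| + |dC \ A|`, is therefore `|dC| = |A|` for every element of `W(T)`.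
-/


theorem Fintype.sum_indicator_const {α : Type*} [Fintype α] (S : Set α) (c : ℕ) :
    ∑ x, S.indicator (fun _ => c) x = c * S.ncard := by
  classical
  simp [Set.indicator_apply, Finset.sum_ite, Set.ncard_eq_toFinset_card', mul_comm]

namespace Subgroup

variable {G : Type*} [Group G]

theorem relIndex_eq_relIndex_of_subset_mul {A B K : Subgroup G} (hKA : K ≤ A)
    (hA : (A : Set G) ⊆ (B : Set G) * K) : B.relIndex K = B.relIndex A := by
  refine Nat.card_congr (Equiv.ofBijective (quotientSubgroupOfEmbeddingOfLE B hKA)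
    ⟨(quotientSubgroupOfEmbeddingOfLE B hKA).injective, ?_⟩)
  rintro ⟨a⟩
  obtain ⟨b, hb, k, hk, hbk : b * k = (a : G)⁻¹⟩ := hA (A.inv_mem a.2)
  refine ⟨QuotientGroup.mk ⟨k⁻¹, K.inv_mem hk⟩, ?_⟩
  rw [quotientSubgroupOfEmbeddingOfLE_apply_mk]
  refine QuotientGroup.eq.mpr ?_
  rw [mem_subgroupOf]
  have hka : k * (a : G) = b⁻¹ := by rw [← inv_mul_cancel_left b k, hbk]; group
  simpa [hka] using B.inv_mem hb

theorem card_mul_relIndex {H K : Subgroup G} (hHK : H ≤ K) :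
    Nat.card H * H.relIndex K = Nat.card K := by
  rw [← relIndex_bot_left, ← relIndex_bot_left, relIndex_mul_relIndex _ _ _ bot_le hHK]

theorem card_inf_mul_relIndex_of_subset_mul {A B C : Subgroup G} (hBA : B ≤ A)
    (hA : (A : Set G) ⊆ (B : Set G) * (A ⊓ C : Subgroup G)) :
    Nat.card (B ⊓ C : Subgroup G) * B.relIndex A = Nat.card (A ⊓ C : Subgroup G) := by
  rw [← relIndex_eq_relIndex_of_subset_mul inf_le_left hA, ← inf_relIndex_right,
    ← inf_assoc, inf_of_le_left hBA]
  exact card_mul_relIndex (inf_le_inf_right C hBA)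

theorem smul_coe_inter_eq_smul_inf {C H : Subgroup G} {d x : G} (hxC : x ∈ d • (C : Set G))
    (hxH : x ∈ H) : d • (C : Set G) ∩ H = x • ((H ⊓ C : Subgroup G) : Set G) := by
  rw [Set.mem_smul_set_iff_inv_smul_mem, smul_eq_mul, SetLike.mem_coe] at hxC
  ext y
  simp only [Set.mem_inter_iff, Set.mem_smul_set_iff_inv_smul_mem, smul_eq_mul, SetLike.mem_coe,
    mem_inf]
  have hC : x⁻¹ * y = (d⁻¹ * x)⁻¹ * (d⁻¹ * y) := by group
  rw [H.mul_mem_cancel_left (H.inv_mem hxH), hC, C.mul_mem_cancel_left (C.inv_mem hxC),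
    and_comm]

theorem relIndex_mul_ncard_smul_inter [Finite G] {A B C : Subgroup G} (hBA : B ≤ A)
    (hA : (A : Set G) ⊆ (B : Set G) * (A ⊓ C : Subgroup G)) (d : G) :
    B.relIndex A * (d • (C : Set G) ∩ B).ncard = (d • (C : Set G) ∩ A).ncard := by
  rcases (d • (C : Set G) ∩ A).eq_empty_or_nonempty with hempty | ⟨x, hxC, hxA⟩
  · have hemptyB : d • (C : Set G) ∩ B = ∅ :=
      Set.subset_eq_empty (Set.inter_subset_inter_right _ hBA) hempty
    rw [hempty, hemptyB, Set.ncard_empty, mul_zero]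
  · obtain ⟨b, hb, c, hc, rfl⟩ := hA hxA
    have hbC : b ∈ d • (C : Set G) := by
      rw [Set.mem_smul_set_iff_inv_smul_mem, smul_eq_mul] at hxC ⊢
      simpa [mul_assoc] using C.mul_mem hxC (C.inv_mem (mem_inf.mp hc).2)
    rw [smul_coe_inter_eq_smul_inf hxC hxA, smul_coe_inter_eq_smul_inf hbC hb,
      Set.ncard_smul_set, Set.ncard_smul_set, ← Nat.card_coe_set_eq, ← Nat.card_coe_set_eq,
      SetLike.coe_sort_coe, SetLike.coe_sort_coe, mul_comm,
      card_inf_mul_relIndex_of_subset_mul hBA hA]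

theorem not_trivialSet_coe {H : Subgroup G} (hbot : H ≠ ⊥) (htop : H ≠ ⊤) :
    ¬ TrivialSet (H : Set G) := by
  obtain ⟨a, ha, ha1⟩ := H.bot_or_exists_ne_one.resolve_left hbot
  rintro (h | h | ⟨w, -, hw⟩)
  · exact Set.eq_empty_iff_forall_notMem.mp h 1 H.one_mem
  · exact htop (coe_eq_univ.mp h)
  · exact ha1 ((hw a ha).trans (hw 1 H.one_mem).symm)

end Subgroup

section WitnessMultiplicity

variable {G : Type*} [Group G] {A B : Subgroup G}

/-- The multiplicity function of the multiset `Ω + |A:B|·B − A` (for `B ≤ A`). -/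
noncomputable def witnessMultiplicity (A B : Subgroup G) : G → ℕ :=
  (B : Set G).indicator (fun _ => B.relIndex A) + ((A : Set G)ᶜ).indicator (fun _ => 1)

theorem sum_indicator_witnessMultiplicity [Fintype G] (S : Set G) :
    ∑ x, S.indicator (witnessMultiplicity A B) x =
      B.relIndex A * (S ∩ B).ncard + (S \ A).ncard := by
  rw [witnessMultiplicity, Set.indicator_add', Set.indicator_indicator, Set.indicator_indicator,
    ← Set.sdiff_eq]
  simp only [Pi.add_apply, Finset.sum_add_distrib, Fintype.sum_indicator_const, one_mul]

theorem sum_witnessMultiplicity [Fintype G] (hBA : B ≤ A) :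
    ∑ x, witnessMultiplicity A B x = Fintype.card G := by
  have h := sum_indicator_witnessMultiplicity (A := A) (B := B) Set.univ
  simp only [Set.indicator_univ, Set.univ_inter, ← Set.compl_eq_univ_sdiff] at h
  rw [h, ← Nat.card_coe_set_eq, SetLike.coe_sort_coe, mul_comm, Subgroup.card_mul_relIndex hBA,
    ← SetLike.coe_sort_coe, Nat.card_coe_set_eq, Set.ncard_add_ncard_compl,
    Nat.card_eq_fintype_card]

theorem sum_indicator_smul_witnessMultiplicity [Fintype G] {C : Subgroup G} (hBA : B ≤ A)
    (hA : (A : Set G) ⊆ (B : Set G) * (A ⊓ C : Subgroup G)) (d : G) :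
    ∑ x, (d • (C : Set G)).indicator (witnessMultiplicity A B) x = Nat.card C := by
  rw [sum_indicator_witnessMultiplicity, Subgroup.relIndex_mul_ncard_smul_inter hBA hA,
    Set.ncard_inter_add_ncard_sdiff_eq_ncard, Set.ncard_smul_set, ← Nat.card_coe_set_eq,
    SetLike.coe_sort_coe]

theorem not_trivialMultiset_witnessMultiplicity [Finite G] (hBA : B ≤ A) (hne : B ≠ A)
    (hA : A ≠ ⊤) : ¬ TrivialMultiset (witnessMultiplicity A B) := by
  obtain ⟨a, haA, haB⟩ := SetLike.exists_of_lt (lt_of_le_of_ne hBA hne)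
  obtain ⟨t, htA⟩ := not_forall.mp (mt A.eq_top_iff'.mpr hA)
  have hr : B.relIndex A ≠ 0 :=
    right_ne_zero_of_mul (Subgroup.card_mul_relIndex hBA ▸ Nat.card_pos.ne')
  have h1 : witnessMultiplicity A B 1 = B.relIndex A := by simp [witnessMultiplicity]
  have ha : witnessMultiplicity A B a = 0 := by simp [witnessMultiplicity, haA, haB]
  have ht : witnessMultiplicity A B t = 1 := by
    simp [witnessMultiplicity, htA, mt (@hBA t) htA]
  rintro (h | ⟨w, -, hw⟩)
  · exact hr (h1 ▸ ha ▸ h 1 a)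
  · exact htA ((hw t (by simp [ht])).trans (hw 1 (by simp [h1, hr])).symm ▸ A.one_mem)

end WitnessMultiplicity

section DiagW

variable {T : Type*} [Group T]

theorem exists_eq_mul_mulAut_mul_of_mem_diagW {g : Equiv.Perm T} (hg : g ∈ diagW T) :
    ∃ (τ : MulAut T) (a b : T), (∀ x, g x = a * τ x * b) ∨ (∀ x, g x = a * τ x⁻¹ * b) := by
  induction hg using Subgroup.closure_induction with
  | mem e he =>
    rcases he with (⟨t₁, t₂, he⟩ | ⟨τ, he⟩) | he
    · exact ⟨1, t₁⁻¹, t₂, Or.inl fun x => by simpa using he x⟩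
    · exact ⟨τ, 1, 1, Or.inl fun x => by simpa using he x⟩
    · exact ⟨1, 1, 1, Or.inr fun x => by simpa using he x⟩
  | one => exact ⟨1, 1, 1, Or.inl fun x => by simp⟩
  | mul g h _ _ hg hh =>
    obtain ⟨τ, a, b, hg | hg⟩ := hg <;> obtain ⟨υ, c, d, hh | hh⟩ := hh
    · exact ⟨τ * υ, a * τ c, τ d * b, Or.inl fun x => by simp [hh, hg, mul_assoc]⟩
    · exact ⟨τ * υ, a * τ c, τ d * b, Or.inr fun x => by simp [hh, hg, mul_assoc]⟩
    · exact ⟨τ * υ, a * τ d⁻¹, τ c⁻¹ * b, Or.inr fun x => by simp [hh, hg, mul_assoc]⟩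
    · exact ⟨τ * υ, a * τ d⁻¹, τ c⁻¹ * b, Or.inl fun x => by simp [hh, hg, mul_assoc]⟩
  | inv g _ hg =>
    obtain ⟨τ, a, b, hg | hg⟩ := hg
    · refine ⟨τ⁻¹, τ⁻¹ a⁻¹, τ⁻¹ b⁻¹, Or.inl fun y => g.injective ?_⟩
      rw [Equiv.Perm.coe_inv, Equiv.apply_symm_apply, hg]
      simp [mul_assoc]
    · refine ⟨τ⁻¹, τ⁻¹ b, τ⁻¹ a, Or.inr fun y => g.injective ?_⟩
      rw [Equiv.Perm.coe_inv, Equiv.apply_symm_apply, hg]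
      simp [mul_assoc]

theorem exists_smul_coe_eq_smul_map_of_mem_diagW {g : Equiv.Perm T} (hg : g ∈ diagW T)
    (H : Subgroup T) :
    ∃ (d : T) (σ : MulAut T), g • (H : Set T) = d • (H.map σ.toMonoidHom : Set T) := by
  obtain ⟨τ, a, b, hg | hg⟩ := exists_eq_mul_mulAut_mul_of_mem_diagW hg <;>
    refine ⟨a * b, MulAut.conj b⁻¹ * τ, ?_⟩ <;>
    ext y <;>
    simp only [← Set.image_smul, Equiv.Perm.smul_def, hg, Subgroup.coe_map, Set.image_image,
      MulEquiv.coe_toMonoidHom, MulAut.mul_apply, MulAut.conj_apply, smul_eq_mul, Set.mem_image,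
      SetLike.mem_coe]
  · simp only [mul_assoc, mul_inv_cancel_left, inv_inv]
  · constructor
    · rintro ⟨x, hx, rfl⟩
      exact ⟨x⁻¹, H.inv_mem hx, by group⟩
    · rintro ⟨x, hx, rfl⟩
      exact ⟨x⁻¹, H.inv_mem hx, by simp [mul_assoc]⟩

end DiagW

theorem diagW_witness_of_supplement_general (T : Type*) [Group T] [Fintype T]
    (A B : Subgroup T) (hA : A ≠ ⊤) (hBA : B ≤ A) (hBneA : B ≠ A)
    (hsupp : ∀ τ : MulAut T, ∀ a ∈ A, ∃ b ∈ B, ∃ c ∈ A ⊓ A.map τ.toMonoidHom, a = b * c) :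
    SpreadingWitness ↥(diagW T) T (A : Set T)
        (fun x => (B : Set T).indicator (fun _ => B.relIndex A) x
          + ((A : Set T)ᶜ).indicator (fun _ => 1) x) ∧
      IsNonSpreading ↥(diagW T) T := by
  have hconst (g : diagW T) :
      ∑ x, (g • (A : Set T)).indicator (witnessMultiplicity A B) x = Nat.card A := by
    obtain ⟨d, σ, hg⟩ := exists_smul_coe_eq_smul_map_of_mem_diagW g.2 A
    have hsuppσ : (A : Set T) ⊆ (B : Set T) * (A ⊓ A.map σ.toMonoidHom : Subgroup T) := by
      intro a ha
      obtain ⟨b, hb, c, hc, rfl⟩ := hsupp σ a ha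
      exact Set.mul_mem_mul hb hc
    rw [Subgroup.smul_def, hg, sum_indicator_smul_witnessMultiplicity hBA hsuppσ,
      Subgroup.card_map_of_injective σ.injective]
  have hwit : SpreadingWitness (diagW T) T A (witnessMultiplicity A B) :=
    ⟨Subgroup.not_trivialSet_coe (ne_bot_of_gt (lt_of_le_of_ne hBA hBneA)) hA,
      not_trivialMultiset_witnessMultiplicity hBA hBneA hA,
      (sum_witnessMultiplicity hBA).symm ▸ dvd_rfl, Nat.card A, hconst⟩
  exact ⟨hwit, _, _, hwit⟩

/-- Corollary 2.3. Let `T` be a non-abelian finite simple group with a proper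
subgroup `A` and a proper normal subgroup `B` of `A` such that `A = B(A ∩ A^τ)` for all
`τ ∈ Aut(T)`. Then `(A, Ω + |A:B|·B − A)` is a witness to `W(T)` being non-spreading in its
action on `Ω = T`; in particular `W(T)` is non-spreading. The multiplicity function of the
multiset `Ω + |A:B|·B − A` takes the value `|A:B|` on `B`, `0` on `A \ B` and `1` off `A`. -/
theorem diagW_witness_of_supplement (T : Type*) [Group T] [Fintype T] [IsSimpleGroup T]
    (hna : ∃ a b : T, a * b ≠ b * a)
    (A B : Subgroup T) (hA : A ≠ ⊤) (hBA : B ≤ A) (hBneA : B ≠ A)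
    (hnorm : ∀ a ∈ A, ∀ b ∈ B, a * b * a⁻¹ ∈ B)
    (hsupp : ∀ τ : MulAut T, ∀ a ∈ A, ∃ b ∈ B, ∃ c ∈ A ⊓ A.map τ.toMonoidHom, a = b * c) :
    SpreadingWitness ↥(diagW T) T (A : Set T)
        (fun x => (B : Set T).indicator (fun _ => B.relIndex A) x
          + ((A : Set T)ᶜ).indicator (fun _ => 1) x) ∧
      IsNonSpreading ↥(diagW T) T :=
  diagW_witness_of_supplement_general T A B hA hBA hBneA hsupp
end

section
/- Let n ≥ 7, let A_n be the alternating group on {1,…,n}, let A be the setwise stabiliser of {1,2,3} in A_n (so A = (S_3 × S_{n−3}) ∩ A_n), and let B ≤ A be the subgroup of all elements of A whose restriction to {1,2,3} is an even permutation of {1,2,3} and whose restriction to {4,…,n} is an even permutation of {4,…,n} (so B ≅ A_3 × A_{n−3}). Then B is a proper normal subgroup of A, and for every permutation σ ∈ S_n we have A = B(A ∩ σ^{-1}Aσ). -/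
/-!
Restriction to `s` is a sign character `signOn s` on the setwise stabiliser of `s`, and `B` is
its kernel inside `A`; so `B` is normal in `A`, and `A = B C` for every subgroup `C ≤ A` not
contained in `B`. For `C = A ∩ σ⁻¹ A σ`, pigeonhole gives `u ≠ v` in `s` and `w ≠ z` outside `s`
such that `σ` sends `u, v` to the same side of `s`, and `w, z` likewise; then the double
transposition `(u v)(w z)` lies in `C` and is odd on `s`.
-/

open Equiv Equiv.Perm MulAction
open scoped Pointwise

theorem Set.exists_ne_iff_of_two_lt_ncard {X : Type*} {t : Set X} (ht : 2 < t.ncard)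
    (p : X → Prop) : ∃ u ∈ t, ∃ v ∈ t, u ≠ v ∧ (p u ↔ p v) := by
  have hProp : (Set.univ : Set Prop).ncard < t.ncard := by
    rwa [Set.ncard_univ, Nat.card_eq_fintype_card, Fintype.card_prop]
  obtain ⟨u, hu, v, hv, huv, h⟩ :=
    Set.exists_ne_map_eq_of_ncard_lt_of_maps_to hProp (f := p) fun _ _ ↦ Set.mem_univ _
  exact ⟨u, hu, v, hv, huv, Iff.of_eq h⟩

namespace Equiv.Perm

section Stabilizer

variable {X : Type*} {s : Set X} {g : Perm X}

theorem mem_stabilizer_set_iff : g ∈ stabilizer (Perm X) s ↔ ∀ x, x ∈ s ↔ g x ∈ s := by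
  simp only [mem_stabilizer_set, Perm.smul_def, Iff.comm]

theorem mem_stabilizer_of_forall_notMem_apply_eq (hg : ∀ x ∉ s, g x = x) :
    g ∈ stabilizer (Perm X) s := by
  refine mem_stabilizer_set_iff.2 fun x ↦ ⟨fun hx ↦ ?_, fun hgx ↦ ?_⟩
  · by_contra hgx
    exact hgx (by rwa [g.injective (hg _ hgx)])
  · by_contra hx
    exact hx (hg x hx ▸ hgx)

theorem mem_stabilizer_of_forall_mem_apply_eq (hg : ∀ x ∈ s, g x = x) :
    g ∈ stabilizer (Perm X) s :=
  stabilizer_compl (G := Perm X) (s := s) ▸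
    mem_stabilizer_of_forall_notMem_apply_eq fun x hx ↦ hg x (not_not.1 hx)

end Stabilizer

variable {X : Type*} [DecidableEq X] [Fintype X]

abbrev alternatingStabilizer (s : Set X) : Subgroup (Perm X) :=
  alternatingGroup X ⊓ stabilizer (Perm X) s

theorem swap_mul_swap_mem_alternatingStabilizer {s : Set X} {u v w z : X} (huv : u ≠ v)
    (hwz : w ≠ z) (hs_uv : u ∈ s ↔ v ∈ s) (hs_wz : w ∈ s ↔ z ∈ s) :
    swap u v * swap w z ∈ alternatingStabilizer s :=
  ⟨by simp [mem_alternatingGroup, sign_swap huv, sign_swap hwz],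
    mul_mem (Equiv.swap_mem_stabilizer.2 hs_uv) (Equiv.swap_mem_stabilizer.2 hs_wz)⟩

variable (s : Set X) [DecidablePred (· ∈ s)]

def signOn : stabilizer (Perm X) s →* ℤˣ :=
  sign.comp (toPermHom (stabilizer (Perm X) s) s)

/-- The subgroup `Alt(s) × Alt(sᶜ)`: an element of the stabiliser is even on both `s` and `sᶜ`
iff it is even and even on `s`. -/
def alternatingEvenOn : Subgroup (Perm X) :=
  alternatingGroup X ⊓ (signOn s).ker.map (stabilizer (Perm X) s).subtype

variable {s}

theorem signOn_of_forall_notMem_apply_eq {g : Perm X} (hg : ∀ x ∉ s, g x = x) :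
    signOn s ⟨g, mem_stabilizer_of_forall_notMem_apply_eq hg⟩ = sign g :=
  sign_subtypePerm g (mem_stabilizer_set.1 (mem_stabilizer_of_forall_notMem_apply_eq hg))
    fun x hx ↦ by_contra fun h ↦ hx (hg x h)

theorem signOn_of_forall_mem_apply_eq {g : Perm X} (hg : ∀ x ∈ s, g x = x) :
    signOn s ⟨g, mem_stabilizer_of_forall_mem_apply_eq hg⟩ = 1 := by
  have hres : toPermHom (stabilizer (Perm X) s) s
      ⟨g, mem_stabilizer_of_forall_mem_apply_eq hg⟩ = 1 :=
    Equiv.ext fun x ↦ Subtype.ext (hg x x.2)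
  rw [signOn, MonoidHom.comp_apply, hres, map_one]

theorem mem_alternatingEvenOn {g : Perm X} : g ∈ alternatingEvenOn s ↔
    g ∈ alternatingGroup X ∧ ∃ hg : g ∈ stabilizer (Perm X) s, signOn s ⟨g, hg⟩ = 1 := by
  simp [alternatingEvenOn]

theorem exists_mul_eq_iff_mem_alternatingEvenOn {g : Perm X} :
    (∃ h₁ h₂ : Perm X, g = h₁ * h₂ ∧ h₁ ∈ alternatingGroup X ∧ h₂ ∈ alternatingGroup X ∧
      (∀ x ∉ s, h₁ x = x) ∧ (∀ x ∈ s, h₂ x = x)) ↔ g ∈ alternatingEvenOn s := by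
  rw [mem_alternatingEvenOn]
  constructor
  · rintro ⟨h₁, h₂, rfl, hh₁, hh₂, hfix₁, hfix₂⟩
    refine ⟨mul_mem hh₁ hh₂, mul_mem (mem_stabilizer_of_forall_notMem_apply_eq hfix₁)
      (mem_stabilizer_of_forall_mem_apply_eq hfix₂), ?_⟩
    rw [show (⟨h₁ * h₂, _⟩ : stabilizer (Perm X) s) =
        ⟨h₁, mem_stabilizer_of_forall_notMem_apply_eq hfix₁⟩ *
          ⟨h₂, mem_stabilizer_of_forall_mem_apply_eq hfix₂⟩ from rfl,
      map_mul, signOn_of_forall_notMem_apply_eq hfix₁, signOn_of_forall_mem_apply_eq hfix₂,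
      mem_alternatingGroup.1 hh₁, mul_one]
  · rintro ⟨hg, hgs, hsign⟩
    set h₁ := ofSubtype (toPermHom (stabilizer (Perm X) s) s ⟨g, hgs⟩)
    have hh₁ : sign h₁ = 1 := by rw [sign_ofSubtype]; exact hsign
    refine ⟨h₁, h₁⁻¹ * g, (mul_inv_cancel_left _ _).symm, hh₁, ?_,
      fun x hx ↦ ofSubtype_apply_of_not_mem _ hx, fun x hx ↦ ?_⟩
    · rw [mem_alternatingGroup, map_mul, map_inv, hh₁, mem_alternatingGroup.1 hg, inv_one,
        one_mul]
    · rw [Perm.mul_apply, Perm.inv_eq_iff_eq]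
      exact (ofSubtype_apply_of_mem (toPermHom (stabilizer (Perm X) s) s ⟨g, hgs⟩) hx).symm

theorem alternatingEvenOn_le_alternatingStabilizer :
    alternatingEvenOn s ≤ alternatingStabilizer s := fun _ hg ↦
  let ⟨hgA, hgs, _⟩ := mem_alternatingEvenOn.1 hg
  ⟨hgA, hgs⟩

theorem conj_mem_alternatingEvenOn {a b : Perm X} (ha : a ∈ alternatingStabilizer s)
    (hb : b ∈ alternatingEvenOn s) : a * b * a⁻¹ ∈ alternatingEvenOn s := by
  obtain ⟨hbA, hbs, hsign⟩ := mem_alternatingEvenOn.1 hb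
  refine mem_alternatingEvenOn.2 ⟨mul_mem (mul_mem ha.1 hbA) (inv_mem ha.1),
    mul_mem (mul_mem ha.2 hbs) (inv_mem ha.2), ?_⟩
  rw [show (⟨a * b * a⁻¹, _⟩ : stabilizer (Perm X) s) = ⟨a, ha.2⟩ * ⟨b, hbs⟩ * ⟨a, ha.2⟩⁻¹
    from rfl, map_mul, map_mul, hsign, mul_one, map_inv, mul_inv_cancel]

theorem signOn_eq_neg_one_of_notMem {g : Perm X} (hg : g ∈ alternatingStabilizer s)
    (hgB : g ∉ alternatingEvenOn s) : signOn s ⟨g, hg.2⟩ = -1 :=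
  (Int.units_eq_one_or _).resolve_left fun h ↦ hgB (mem_alternatingEvenOn.2 ⟨hg.1, hg.2, h⟩)

theorem mul_inv_mem_alternatingEvenOn {a c : Perm X} (ha : a ∈ alternatingStabilizer s)
    (hc : c ∈ alternatingStabilizer s) (haB : a ∉ alternatingEvenOn s)
    (hcB : c ∉ alternatingEvenOn s) : a * c⁻¹ ∈ alternatingEvenOn s := by
  refine mem_alternatingEvenOn.2 ⟨mul_mem ha.1 (inv_mem hc.1), mul_mem ha.2 (inv_mem hc.2), ?_⟩
  rw [show (⟨a * c⁻¹, _⟩ : stabilizer (Perm X) s) = ⟨a, ha.2⟩ * ⟨c, hc.2⟩⁻¹ from rfl, map_mul,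
    map_inv, signOn_eq_neg_one_of_notMem ha haB, signOn_eq_neg_one_of_notMem hc hcB]
  decide

theorem signOn_swap_mul_swap {u v w z : X} (hu : u ∈ s) (hv : v ∈ s) (hw : w ∉ s) (hz : z ∉ s)
    (huv : u ≠ v) (h : swap u v * swap w z ∈ stabilizer (Perm X) s) :
    signOn s ⟨swap u v * swap w z, h⟩ = -1 := by
  have hfix_uv : ∀ x ∉ s, swap u v x = x := fun x hx ↦
    swap_apply_of_ne_of_ne (ne_of_mem_of_not_mem hu hx).symm (ne_of_mem_of_not_mem hv hx).symm
  have hfix_wz : ∀ x ∈ s, swap w z x = x := fun x hx ↦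
    swap_apply_of_ne_of_ne (ne_of_mem_of_not_mem hx hw) (ne_of_mem_of_not_mem hx hz)
  rw [show (⟨swap u v * swap w z, h⟩ : stabilizer (Perm X) s) =
      ⟨swap u v, mem_stabilizer_of_forall_notMem_apply_eq hfix_uv⟩ *
        ⟨swap w z, mem_stabilizer_of_forall_mem_apply_eq hfix_wz⟩ from rfl,
    map_mul, signOn_of_forall_notMem_apply_eq hfix_uv, signOn_of_forall_mem_apply_eq hfix_wz,
    sign_swap huv, mul_one]

theorem exists_notMem_alternatingEvenOn_conj_mem (hs : 2 < s.ncard) (hsc : 2 < sᶜ.ncard)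
    (σ : Perm X) : ∃ c ∈ alternatingStabilizer s,
      c ∉ alternatingEvenOn s ∧ σ * c * σ⁻¹ ∈ alternatingStabilizer s := by
  obtain ⟨u, hu, v, hv, huv, hσuv⟩ := Set.exists_ne_iff_of_two_lt_ncard hs (σ · ∈ s)
  obtain ⟨w, hw, z, hz, hwz, hσwz⟩ := Set.exists_ne_iff_of_two_lt_ncard hsc (σ · ∈ s)
  have hc := swap_mul_swap_mem_alternatingStabilizer huv hwz (iff_of_true hu hv)
    (iff_of_false hw hz)
  refine ⟨_, hc, fun hcB ↦ ?_, ?_⟩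
  · obtain ⟨-, _, h⟩ := mem_alternatingEvenOn.1 hcB
    rw [signOn_swap_mul_swap hu hv hw hz huv] at h
    exact absurd h (by decide)
  · rw [show σ * (swap u v * swap w z) * σ⁻¹ = (σ * swap u v * σ⁻¹) * (σ * swap w z * σ⁻¹) by
      group, ← swap_apply_apply, ← swap_apply_apply]
    exact swap_mul_swap_mem_alternatingStabilizer (σ.injective.ne huv) (σ.injective.ne hwz)
      hσuv hσwz

end Equiv.Perm

/-- Let `n ≥ 7`, let `A` be the setwise stabiliser of `α = {0,1,2}` in the
alternating group on `Fin n` (so `A = (S_3 × S_{n−3}) ∩ A_n`), and let `B ≤ A` consist of the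
elements whose restrictions to `α` and to its complement are both even (so `B ≅ A_3 × A_{n−3}`,
described here as the products `h₁ * h₂` of even permutations with `h₁` fixing the complement
of `α` pointwise and `h₂` fixing `α` pointwise). Then `B` is a proper normal subgroup of `A`,
and for every `σ ∈ S_n` we have `A = B(A ∩ σ⁻¹Aσ)` (membership `c ∈ σ⁻¹Aσ` is expressed as
`σ * c * σ⁻¹ ∈ A`). -/
theorem alternating_three_subsets_supplement (n : ℕ) (hn : 7 ≤ n)
    (α : Set (Fin n)) (hα : α = {⟨0, by omega⟩, ⟨1, by omega⟩, ⟨2, by omega⟩})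
    (A B : Subgroup (Equiv.Perm (Fin n)))
    (hA : ∀ g : Equiv.Perm (Fin n),
      g ∈ A ↔ g ∈ alternatingGroup (Fin n) ∧ ∀ x, x ∈ α ↔ g x ∈ α)
    (hB : ∀ g : Equiv.Perm (Fin n),
      g ∈ B ↔ ∃ h₁ h₂ : Equiv.Perm (Fin n), g = h₁ * h₂ ∧
        h₁ ∈ alternatingGroup (Fin n) ∧ h₂ ∈ alternatingGroup (Fin n) ∧
        (∀ x ∉ α, h₁ x = x) ∧ (∀ x ∈ α, h₂ x = x)) :
    B ≤ A ∧ B ≠ A ∧ (∀ a ∈ A, ∀ b ∈ B, a * b * a⁻¹ ∈ B) ∧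
      ∀ σ : Equiv.Perm (Fin n), ∀ a ∈ A,
        ∃ b ∈ B, ∃ c ∈ A, σ * c * σ⁻¹ ∈ A ∧ a = b * c := by
  classical
  obtain rfl : A = alternatingStabilizer α :=
    Subgroup.ext fun g ↦ by rw [hA, Subgroup.mem_inf, mem_stabilizer_set_iff]
  obtain rfl : B = alternatingEvenOn α :=
    Subgroup.ext fun g ↦ by rw [hB, exists_mul_eq_iff_mem_alternatingEvenOn]
  have hα3 : α.ncard = 3 := Set.ncard_eq_three.2 ⟨_, _, _, by simp, by simp, by simp, hα⟩
  have hαc : 2 < αᶜ.ncard := by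
    rw [Set.ncard_compl, hα3, Nat.card_eq_fintype_card, Fintype.card_fin]; omega
  obtain ⟨c₀, hc₀, hc₀B, -⟩ := exists_notMem_alternatingEvenOn_conj_mem (by omega) hαc 1
  refine ⟨alternatingEvenOn_le_alternatingStabilizer, fun h ↦ hc₀B (h ▸ hc₀),
    fun a ha b hb ↦ conj_mem_alternatingEvenOn ha hb, fun σ a ha ↦ ?_⟩
  obtain ⟨c, hc, hcB, hσc⟩ := exists_notMem_alternatingEvenOn_conj_mem (by omega) hαc σ
  by_cases haB : a ∈ alternatingEvenOn α
  · exact ⟨a, haB, 1, one_mem _, by simp, (mul_one a).symm⟩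
  · exact ⟨a * c⁻¹, mul_inv_mem_alternatingEvenOn ha hc haB hcB, c, hc, hσc,
      (inv_mul_cancel_right a c).symm⟩
end
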